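/- arXiv:2210.15480 — 2 statements merged into one kernel-verified Lean document; each statement's English description precedes it below -/
import Mathlib

section
/- (Singer's theorem) For every prime p and every positive integer m, setting q = p^{2m} + p^m + 1, there exists a subset S ⊆ ℤ/qℤ with |S| = p^m + 1 such that every nonzero x ∈ ℤ/qℤ can be written in exactly one way as x = a₁ − a₂ with a₁, a₂ ∈ S; that is, S is a perfect difference set in ℤ/qℤ. -/
set_option maxHeartbeats 1000000
set_option synthInstance.maxHeartbeats 1000000

open Module Finset Polynomial

/-- A perfect difference set (Singer set) in `ℤ/qℤ`: every nonzero element has a unique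
representation as a difference of two elements of `S`. -/
def IsPerfectDifferenceSet {q : ℕ} (S : Finset (ZMod q)) : Prop :=
  ∀ x : ZMod q, x ≠ 0 →
    ∃! p : ZMod q × ZMod q, p.1 ∈ S ∧ p.2 ∈ S ∧ p.1 - p.2 = x

section Singer

variable {K : Type} [Field K] [Fintype K]

/-- The subgroup of units of `K` whose value lies in the subfield `F`. -/
def Singer.unitsSub (F : Subfield K) : Subgroup Kˣ where
  carrier := {u | (u : K) ∈ F}
  one_mem' := F.one_mem
  mul_mem' := by intro a b ha hb; exact F.mul_mem ha hb
  inv_mem' := by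
    intro a ha
    simpa [Units.val_inv_eq_inv_val] using F.inv_mem ha

/-- The quotient map to `Kˣ` modulo `Fˣ`. -/
noncomputable def Singer.qmap (F : Subfield K) : Kˣ →* Kˣ ⧸ Singer.unitsSub F :=
  QuotientGroup.mk' _

open scoped Classical in
/-- The "class of a nonzero element" map `K → Kˣ ⧸ Fˣ`, sending `0` to `1`. -/
noncomputable def Singer.gmap (F : Subfield K) : K → Kˣ ⧸ Singer.unitsSub F :=
  fun x => if h : x = 0 then 1 else Singer.qmap F (Units.mk0 x h)

namespace Singer

set_option linter.unusedSectionVars false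

lemma gmap_apply (F : Subfield K) (x : K) (hx : x ≠ 0) :
    gmap F x = qmap F (Units.mk0 x hx) := by
  simp [gmap, hx]

lemma gmap_eq_iff (F : Subfield K) {a b : K} (ha : a ≠ 0) (hb : b ≠ 0) :
    gmap F a = gmap F b ↔ ∃ c : K, c ∈ F ∧ c ≠ 0 ∧ b = a * c := by
  rw [gmap_apply F a ha, gmap_apply F b hb, qmap, QuotientGroup.mk'_eq_mk']
  constructor
  · rintro ⟨z, hz, hzz⟩
    refine ⟨(z : K), hz, z.ne_zero, ?_⟩
    have := congrArg Units.val hzz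
    simpa using this.symm
  · rintro ⟨c, hcF, hc0, rfl⟩
    refine ⟨Units.mk0 c hc0, hcF, ?_⟩
    ext
    simp

lemma qmap_eq_one_iff (F : Subfield K) (u : Kˣ) :
    qmap F u = 1 ↔ (u : K) ∈ F := by
  rw [qmap, QuotientGroup.mk'_apply, QuotientGroup.eq_one_iff]
  rfl

/-- The key dimension lemma: if `L` is a 2-dimensional `F`-subspace of the 3-dimensional
field extension `K`, and `γ ∉ F` is nonzero, then `L ∩ γ·L` is 1-dimensional. -/
lemma finrank_inf_eq_one (F : Subfield K) (h3 : finrank F K = 3)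
    (L : Submodule F K) (hL : finrank F L = 2) (γ : K) (hγ0 : γ ≠ 0) (hγF : γ ∉ F) :
    finrank F ↥(L ⊓ L.map (LinearMap.mulLeft F γ)) = 1 := by
  classical
  set Lγ := L.map (LinearMap.mulLeft F γ) with hLγdef
  -- mul by γ is a linear equiv
  let e : K ≃ₗ[F] K := LinearEquiv.ofLinear (LinearMap.mulLeft F γ) (LinearMap.mulLeft F γ⁻¹)
    (by ext x; simp [LinearMap.mulLeft_apply, ← mul_assoc, mul_inv_cancel₀ hγ0])
    (by ext x; simp [LinearMap.mulLeft_apply, ← mul_assoc, inv_mul_cancel₀ hγ0])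
  have hmapeq : Lγ = L.map (e : K →ₗ[F] K) := rfl
  have hLγ : finrank F Lγ = 2 := by
    rw [hmapeq, LinearEquiv.finrank_map_eq e L, hL]
  have hsum : finrank F ↥(L ⊔ Lγ) + finrank F ↥(L ⊓ Lγ) = 4 := by
    rw [Submodule.finrank_sup_add_finrank_inf_eq, hL, hLγ]
  have hsup3 : finrank F ↥(L ⊔ Lγ) ≤ 3 := h3 ▸ Submodule.finrank_le _
  have hinf2 : finrank F ↥(L ⊓ Lγ) ≤ 2 := hL ▸ Submodule.finrank_mono inf_le_left
  -- rule out dimension 2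
  have hne2 : finrank F ↥(L ⊓ Lγ) ≠ 2 := by
    intro h2
    have hinfL : L ⊓ Lγ = L :=
      Submodule.eq_of_le_of_finrank_eq inf_le_left (by rw [h2, hL])
    have hLle : L ≤ Lγ := by rw [← hinfL]; exact inf_le_right
    have hLeq : L = Lγ := Submodule.eq_of_le_of_finrank_eq hLle (by rw [hL, hLγ])
    -- so γ • L ⊆ L; derive a contradiction via the subfield generated by γ
    have hmulγ : ∀ v ∈ L, γ * v ∈ L := by
      intro v hv
      rw [hLeq]
      exact ⟨v, hv, rfl⟩
    have hadjoin : ∀ x ∈ Algebra.adjoin F ({γ} : Set K), ∀ v ∈ L, x * v ∈ L := by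
      intro x hx
      induction hx using Algebra.adjoin_induction with
      | mem y hy =>
        rcases hy with rfl
        exact hmulγ
      | algebraMap r =>
        intro v hv
        have : (algebraMap F K r) * v = r • v := rfl
        rw [this]
        exact L.smul_mem r hv
      | add y z hy hz ihy ihz =>
        intro v hv
        rw [add_mul]
        exact L.add_mem (ihy v hv) (ihz v hv)
      | mul y z hy hz ihy ihz =>
        intro v hv
        rw [mul_assoc]
        exact ihy _ (ihz v hv)
    have hInt : IsIntegral F γ := IsIntegral.of_finite F γ
    set E := IntermediateField.adjoin F ({γ} : Set K) with hEdef
    have hE : E.toSubalgebra = Algebra.adjoin F ({γ} : Set K) :=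
      IntermediateField.adjoin_simple_toSubalgebra_of_isAlgebraic hInt.isAlgebraic
    have htower : finrank F E * finrank E K = 3 := by
      rw [finrank_mul_finrank F E K, h3]
    have hdvd : finrank F E ∣ 3 := ⟨finrank E K, htower.symm⟩
    have h13 : finrank F E = 1 ∨ finrank F E = 3 :=
      (Nat.prime_three.eq_one_or_self_of_dvd _ hdvd).imp id id
    rcases h13 with h1 | hthree
    · -- then γ ∈ F, contradiction
      have hbot : E = ⊥ := IntermediateField.finrank_eq_one_iff.mp h1
      have hγE : γ ∈ E := IntermediateField.mem_adjoin_simple_self F γ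
      rw [hbot, IntermediateField.mem_bot] at hγE
      obtain ⟨c, hc⟩ := hγE
      exact hγF (hc ▸ c.2)
    · -- then E = K and L is an ideal of K, so L = K, contradiction with dim 2
      have hEK1 : finrank E K = 1 := by
        rw [hthree] at htower
        omega
      have hallE : ∀ x : K, ∀ v ∈ L, x * v ∈ L := by
        have hbt : (⊥ : Subalgebra E K) = ⊤ :=
          Subalgebra.bot_eq_top_of_finrank_eq_one hEK1
        intro x
        have hx : x ∈ (⊥ : Subalgebra E K) := by rw [hbt]; trivial
        rw [Algebra.mem_bot] at hx
        obtain ⟨c, hc⟩ := hx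
        have hcE : (c : K) ∈ Algebra.adjoin F ({γ} : Set K) := by
          rw [← hE]; exact c.2
        have hcc : algebraMap E K c = (c : K) := rfl
        rw [← hc, hcc]
        exact hadjoin _ hcE
      obtain ⟨v₀, hv₀L, hv₀0⟩ : ∃ v₀ ∈ L, v₀ ≠ 0 := by
        rw [← Submodule.ne_bot_iff]
        intro hLbot
        rw [hLbot, finrank_bot] at hL
        omega
      have hLtop : L = ⊤ := by
        rw [eq_top_iff]
        intro y _
        have hyy : (y * v₀⁻¹) * v₀ = y := by field_simp
        rw [← hyy]
        exact hallE _ _ hv₀L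
      rw [hLtop, finrank_top] at hL
      rw [h3] at hL
      omega
  omega

/-- The key uniqueness property in the quotient group. -/
lemma key (F : Subfield K) (h3 : finrank F K = 3)
    (L : Submodule F K) (hL : finrank F L = 2)
    (c : Kˣ ⧸ unitsSub F) (hc : c ≠ 1) :
    ∃! P : (Kˣ ⧸ unitsSub F) × (Kˣ ⧸ unitsSub F),
      (∃ x, x ∈ L ∧ x ≠ 0 ∧ gmap F x = P.1) ∧
      (∃ y, y ∈ L ∧ y ≠ 0 ∧ gmap F y = P.2) ∧ P.1 * P.2⁻¹ = c := by
  classical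
  obtain ⟨γu, hγu⟩ : ∃ u, qmap F u = c := QuotientGroup.mk'_surjective _ c
  have hγ0 : (γu : K) ≠ 0 := γu.ne_zero
  have hγF : (γu : K) ∉ F := by
    intro h
    exact hc (hγu ▸ (qmap_eq_one_iff F γu).mpr h)
  set W := L ⊓ L.map (LinearMap.mulLeft F (γu : K)) with hWdef
  have hW : finrank F ↥W = 1 := finrank_inf_eq_one F h3 L hL _ hγ0 hγF
  obtain ⟨w, hwW, hw0⟩ : ∃ w ∈ W, w ≠ 0 := by
    rw [← Submodule.ne_bot_iff]
    intro hbot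
    rw [hbot, finrank_bot] at hW
    omega
  have hwL : w ∈ L := hwW.1
  obtain ⟨v, hvL, hvw⟩ : ∃ v ∈ L, (γu : K) * v = w := hwW.2
  have hv0 : v ≠ 0 := by
    rintro rfl
    rw [mul_zero] at hvw
    exact hw0 hvw.symm
  -- W = span {w}
  have hWspan : Submodule.span F {w} = W := by
    apply Submodule.eq_of_le_of_finrank_eq
    · rw [Submodule.span_le, Set.singleton_subset_iff]; exact hwW
    · rw [finrank_span_singleton hw0, hW]
  have hprod : gmap F w * (gmap F v)⁻¹ = c := by
    rw [gmap_apply F w hw0, gmap_apply F v hv0, ← hγu, qmap]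
    rw [← map_inv, ← map_mul]
    congr 1
    ext
    simp [← hvw, mul_comm, mul_assoc, inv_mul_cancel₀ hv0]
  refine ⟨(gmap F w, gmap F v), ⟨⟨w, hwL, hw0, rfl⟩, ⟨v, hvL, hv0, rfl⟩, hprod⟩, ?_⟩
  rintro ⟨A, B⟩ ⟨⟨x, hxL, hx0, hxA⟩, ⟨y, hyL, hy0, hyB⟩, hAB⟩
  have hxA' : gmap F x = A := hxA
  have hyB' : gmap F y = B := hyB
  have hAB' : A * B⁻¹ = c := hAB
  -- From A * B⁻¹ = c : x = c₀ * γ * y for some c₀ ∈ F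
  have hxy : gmap F x * (gmap F y)⁻¹ = qmap F γu := by rw [hxA', hyB', hAB', hγu]
  have hione : qmap F (Units.mk0 x hx0 * (Units.mk0 y hy0)⁻¹ * γu⁻¹) = 1 := by
    rw [map_mul, map_mul, map_inv, map_inv, ← gmap_apply F x hx0, ← gmap_apply F y hy0]
    rw [mul_inv_eq_one]
    exact hxy
  rw [qmap_eq_one_iff] at hione
  set c₀ : K := x * y⁻¹ * (γu : K)⁻¹ with hc₀def
  have hc₀F : c₀ ∈ F := by simpa [hc₀def] using hione
  have hc₀0 : c₀ ≠ 0 := by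
    simp only [hc₀def]
    exact mul_ne_zero (mul_ne_zero hx0 (inv_ne_zero hy0)) (inv_ne_zero hγ0)
  have hxeq : x = c₀ * (γu : K) * y := by
    rw [hc₀def]
    field_simp
  -- γ y ∈ W
  have hγyW : (γu : K) * y ∈ W := by
    constructor
    · have heq : (γu : K) * y = (⟨c₀, hc₀F⟩ : F)⁻¹ • x := by
        have hval : ((⟨c₀, hc₀F⟩ : F)⁻¹ : F) • x = (c₀⁻¹ : K) * x := rfl
        rw [hval, hxeq]
        field_simp
      rw [heq]
      exact L.smul_mem _ hxL
    · exact ⟨y, hyL, rfl⟩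
  rw [← hWspan, Submodule.mem_span_singleton] at hγyW
  obtain ⟨μ, hμ⟩ := hγyW
  have hμval : (γu : K) * y = (μ : K) * w := by rw [← hμ]; rfl
  have hμ0 : (μ : K) ≠ 0 := by
    intro h
    have hy' : (γu : K) * y ≠ 0 := mul_ne_zero hγ0 hy0
    rw [hμval, h, zero_mul] at hy'
    exact hy' rfl
  -- y = μ * v
  have hyv : y = (μ : K) * v := by
    have hh := hμval
    rw [← hvw] at hh
    have : (γu : K) * y = (γu : K) * ((μ : K) * v) := by
      rw [hh]; ring
    exact mul_left_cancel₀ hγ0 this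
  have hBv : B = gmap F v := by
    rw [← hyB', gmap_eq_iff F hy0 hv0]
    refine ⟨(μ : K)⁻¹, F.inv_mem μ.2, inv_ne_zero hμ0, ?_⟩
    rw [hyv]
    field_simp
  have hAw : A = gmap F w := by
    have h1 : c * B = A := by rw [← hAB']; exact inv_mul_cancel_right A B
    have h2 : c * gmap F v = gmap F w := by rw [← hprod]; exact inv_mul_cancel_right _ _
    rw [← h1, hBv, h2]
  exact Prod.ext hAw hBv

end Singer

open scoped Classical in
open Singer in
/-- Abstract Singer theorem: a cubic extension of finite fields yields a
perfect difference set. -/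
theorem singer_abstract (F : Subfield K) (q : ℕ) (h3 : finrank F K = 3)
    (hq : Fintype.card K - 1 = q * (Fintype.card F - 1)) :
    ∃ S : Finset (ZMod q), S.card = Fintype.card F + 1 ∧ IsPerfectDifferenceSet S := by
  classical
  set n := Fintype.card F with hn
  have hn2 : 2 ≤ n := Fintype.one_lt_card
  have hcardK : Fintype.card K = n ^ 3 := by
    rw [card_eq_pow_finrank (K := F) (V := K), h3]
  have hKn : 7 ≤ Fintype.card K := by
    have : 2 ^ 3 ≤ n ^ 3 := Nat.pow_le_pow_left hn2 3
    omega
  have hq0 : q ≠ 0 := by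
    rintro rfl
    rw [zero_mul] at hq
    omega
  haveI : NeZero q := ⟨hq0⟩
  -- cardinality of the quotient group
  have hFu : Nat.card (unitsSub F) = n - 1 := by
    have hequiv : Nat.card (unitsSub F) = Nat.card Fˣ := by
      refine Nat.card_congr ⟨fun u => Units.mk0 ⟨((u : Kˣ) : K), u.2⟩
        (by simp [Subtype.ext_iff, (u : Kˣ).ne_zero]),
        fun v => ⟨Units.mk0 (((v : F) : K))
          (by simpa [Subtype.ext_iff] using v.ne_zero), by simp [unitsSub]⟩,
        fun u => by ext; simp, fun v => by ext; simp⟩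
    rw [hequiv, Nat.card_eq_fintype_card, Fintype.card_units, hn]
  have hcardQ : Nat.card (Kˣ ⧸ unitsSub F) = q := by
    have h1 : Nat.card Kˣ = Nat.card (Kˣ ⧸ unitsSub F) * Nat.card (unitsSub F) :=
      Subgroup.card_eq_card_quotient_mul_card_subgroup _
    have h2 : Nat.card Kˣ = n ^ 3 - 1 := by
      rw [Nat.card_eq_fintype_card, Fintype.card_units, hcardK]
    rw [h2, hFu] at h1
    rw [hcardK] at hq
    rw [hq] at h1
    have hpos : 0 < n - 1 := by omega
    exact Nat.eq_of_mul_eq_mul_right hpos h1.symm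
  haveI : IsCyclic (Kˣ ⧸ unitsSub F) := isCyclic_of_surjective _ (QuotientGroup.mk'_surjective _)
  have hcardM : Nat.card (Kˣ ⧸ unitsSub F) = Nat.card (Multiplicative (ZMod q)) := by
    rw [hcardQ, Nat.card_congr Multiplicative.toAdd, Nat.card_zmod]
  set e : (Kˣ ⧸ unitsSub F) ≃* Multiplicative (ZMod q) := mulEquivOfCyclicCardEq hcardM with hedef
  -- the 2-dimensional subspace L
  let b : Basis (Fin 3) F K := finBasisOfFinrankEq F K h3
  let vb : Fin 2 → K := b ∘ Fin.castLE (by omega)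
  have hli : LinearIndependent F vb :=
    b.linearIndependent.comp _ (Fin.castLE_injective _)
  set L : Submodule F K := Submodule.span F (Set.range vb) with hLdef
  have hL : finrank F L = 2 := by
    rw [hLdef, finrank_span_eq_card hli, Fintype.card_fin]
  have hLcard : Fintype.card L = n ^ 2 := by
    rw [card_eq_pow_finrank (K := F) (V := L), hL]
  -- the finset of nonzero elements of L
  set Lset : Finset K := ((L : Set K).toFinset).erase 0 with hLsetdef
  have hLset_mem : ∀ x : K, x ∈ Lset ↔ x ∈ L ∧ x ≠ 0 := by
    intro x
    simp [hLsetdef, Set.mem_toFinset, and_comm]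
  have hLset_card : Lset.card = n ^ 2 - 1 := by
    rw [hLsetdef, Finset.card_erase_of_mem (by simp [Set.mem_toFinset])]
    rw [Set.toFinset_card]
    have hcc : Fintype.card ↥(L : Set K) = Fintype.card L := Fintype.card_congr (Equiv.refl _)
    rw [hcc, hLcard]
  -- the map to ZMod q
  set f : K → ZMod q := fun x => Multiplicative.toAdd (e (gmap F x)) with hfdef
  set S : Finset (ZMod q) := Lset.image f with hSdef
  have hf_inj : ∀ a b : Kˣ ⧸ unitsSub F,
      Multiplicative.toAdd (e a) = Multiplicative.toAdd (e b) → a = b := by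
    intro a b h
    exact e.injective (Multiplicative.toAdd.injective h)
  have hS_mem : ∀ s : ZMod q, s ∈ S ↔ ∃ x, x ∈ L ∧ x ≠ 0 ∧ f x = s := by
    intro s
    simp only [hSdef, Finset.mem_image]
    constructor
    · rintro ⟨x, hx, rfl⟩
      obtain ⟨h1, h2⟩ := (hLset_mem x).mp hx
      exact ⟨x, h1, h2, rfl⟩
    · rintro ⟨x, h1, h2, rfl⟩
      exact ⟨x, (hLset_mem x).mpr ⟨h1, h2⟩, rfl⟩
  -- fibers of f over Lset have size n - 1
  have hfiber : ∀ s ∈ S, (Lset.filter (fun x => f x = s)).card = n - 1 := by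
    intro s hs
    obtain ⟨x₀, hx₀L, hx₀0, hfx₀⟩ := (hS_mem s).mp hs
    have himg : Lset.filter (fun x => f x = s) =
        ((Finset.univ : Finset F).erase 0).image (fun cc : F => (cc : K) * x₀) := by
      ext z
      simp only [Finset.mem_filter, Finset.mem_image, Finset.mem_erase, Finset.mem_univ,
        and_true]
      constructor
      · rintro ⟨hzLset, hfz⟩
        obtain ⟨hzL, hz0⟩ := (hLset_mem z).mp hzLset
        have hgg : gmap F x₀ = gmap F z := by
          apply hf_inj
          show Multiplicative.toAdd (e (gmap F x₀)) = Multiplicative.toAdd (e (gmap F z))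
          have e1 : Multiplicative.toAdd (e (gmap F x₀)) = s := hfx₀
          have e2 : Multiplicative.toAdd (e (gmap F z)) = s := hfz
          rw [e1, e2]
        obtain ⟨c, hcF, hc0, hcz⟩ := (gmap_eq_iff F hx₀0 hz0).mp hgg
        refine ⟨⟨c, hcF⟩, fun h => hc0 (congrArg Subtype.val h), ?_⟩
        show c * x₀ = z
        rw [hcz]; ring
      · rintro ⟨cc, hcc0, rfl⟩
        have huK : (cc : K) ≠ 0 := fun h => hcc0 (Subtype.ext h)
        have hmem : (cc : K) * x₀ ∈ L := by
          have hsm : (cc : K) * x₀ = cc • x₀ := rfl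
          rw [hsm]
          exact L.smul_mem _ hx₀L
        have hne : (cc : K) * x₀ ≠ 0 := mul_ne_zero huK hx₀0
        refine ⟨(hLset_mem _).mpr ⟨hmem, hne⟩, ?_⟩
        have hgg : gmap F ((cc : K) * x₀) = gmap F x₀ := by
          rw [gmap_eq_iff F hne hx₀0]
          exact ⟨((cc : K))⁻¹, F.inv_mem cc.2, inv_ne_zero huK, by field_simp⟩
        show Multiplicative.toAdd (e (gmap F _)) = s
        rw [hgg]
        exact hfx₀
    have hinj : Function.Injective (fun cc : F => (cc : K) * x₀) := by
      intro c₁ c₂ huu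
      exact Subtype.ext (mul_right_cancel₀ hx₀0 huu)
    rw [himg, Finset.card_image_of_injective _ hinj,
      Finset.card_erase_of_mem (Finset.mem_univ 0), Finset.card_univ, ← hn]
  -- |S| = n + 1
  have hScard : S.card = n + 1 := by
    have hsum : Lset.card = ∑ s ∈ S, (Lset.filter (fun x => f x = s)).card := by
      rw [hSdef]
      exact Finset.card_eq_sum_card_image f Lset
    rw [Finset.sum_congr rfl hfiber, Finset.sum_const, smul_eq_mul] at hsum
    rw [hLset_card] at hsum
    have hnum : n ^ 2 - 1 = (n + 1) * (n - 1) := by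
      obtain ⟨k, hk⟩ : ∃ k, n = k + 2 := ⟨n - 2, by omega⟩
      rw [hk]
      have e1 : (k + 2) ^ 2 = (k + 3) * (k + 1) + 1 := by ring
      rw [e1, Nat.add_sub_cancel]
      congr 1 <;> omega
    rw [hnum] at hsum
    have hfin := Nat.eq_of_mul_eq_mul_right (show 0 < n - 1 by omega) hsum
    omega
  refine ⟨S, hScard, ?_⟩
  -- the perfect difference property
  intro x hx
  set c : Kˣ ⧸ unitsSub F := e.symm (Multiplicative.ofAdd x) with hcdef
  have hc1 : c ≠ 1 := by
    intro h
    apply hx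
    have : Multiplicative.ofAdd x = e 1 := by rw [← h, hcdef, MulEquiv.apply_symm_apply]
    rw [map_one] at this
    simpa using this
  obtain ⟨P₀, ⟨⟨x₁, hx₁L, hx₁0, hx₁P⟩, ⟨y₁, hy₁L, hy₁0, hy₁P⟩, hP₀⟩, hPuniq⟩ :=
    key F h3 L hL c hc1
  have heP : ∀ u v : Kˣ ⧸ unitsSub F,
      Multiplicative.toAdd (e u) - Multiplicative.toAdd (e v) = Multiplicative.toAdd (e (u * v⁻¹)) := by
    intro u v
    rw [map_mul, map_inv, toAdd_mul, toAdd_inv, sub_eq_add_neg]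
  refine ⟨(Multiplicative.toAdd (e P₀.1), Multiplicative.toAdd (e P₀.2)), ⟨?_, ?_, ?_⟩, ?_⟩
  · exact (hS_mem _).mpr ⟨x₁, hx₁L, hx₁0, by rw [hfdef]; show Multiplicative.toAdd (e (gmap F x₁)) = _; rw [hx₁P]⟩
  · exact (hS_mem _).mpr ⟨y₁, hy₁L, hy₁0, by rw [hfdef]; show Multiplicative.toAdd (e (gmap F y₁)) = _; rw [hy₁P]⟩
  · show Multiplicative.toAdd (e P₀.1) - Multiplicative.toAdd (e P₀.2) = x
    rw [heP, hP₀, hcdef, MulEquiv.apply_symm_apply]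
    rfl
  · rintro ⟨a, bb⟩ ⟨haS, hbS, hab⟩
    obtain ⟨xa, hxaL, hxa0, hfa⟩ := (hS_mem a).mp haS
    obtain ⟨xb, hxbL, hxb0, hfb⟩ := (hS_mem bb).mp hbS
    have hPP : (gmap F xa, gmap F xb) = P₀ := by
      apply hPuniq
      refine ⟨⟨xa, hxaL, hxa0, rfl⟩, ⟨xb, hxbL, hxb0, rfl⟩, ?_⟩
      show gmap F xa * (gmap F xb)⁻¹ = c
      apply e.injective
      rw [map_mul, map_inv, hcdef, MulEquiv.apply_symm_apply]
      have ha' : e (gmap F xa) = Multiplicative.ofAdd a := by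
        have : Multiplicative.toAdd (e (gmap F xa)) = a := hfa
        rw [← this]; rfl
      have hb' : e (gmap F xb) = Multiplicative.ofAdd bb := by
        have : Multiplicative.toAdd (e (gmap F xb)) = bb := hfb
        rw [← this]; rfl
      rw [ha', hb', ← ofAdd_neg, ← ofAdd_add]
      congr 1
      simp only [Prod.fst, Prod.snd] at hab
      rw [← hab]
      ring
    have ha2 : a = Multiplicative.toAdd (e P₀.1) := by
      rw [← hPP]
      exact hfa.symm
    have hb2 : bb = Multiplicative.toAdd (e P₀.2) := by
      rw [← hPP]
      exact hfb.symm
    exact Prod.ext ha2 hb2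

end Singer

/-- The subfield of elements fixed by the `k`-th iterate of Frobenius. -/
def frobFixed (K : Type) [Field K] (p k : ℕ) [Fact p.Prime] [CharP K p] : Subfield K where
  carrier := {x | x ^ p ^ k = x}
  zero_mem' := by
    have hp : p ≠ 0 := (Fact.out : p.Prime).ne_zero
    simp [Set.mem_setOf_eq, zero_pow (pow_ne_zero k hp)]
  one_mem' := one_pow _
  add_mem' := by
    intro a b ha hb
    simp only [Set.mem_setOf_eq] at *
    rw [add_pow_char_pow, ha, hb]
  mul_mem' := by
    intro a b ha hb
    simp only [Set.mem_setOf_eq] at *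
    rw [mul_pow, ha, hb]
  neg_mem' := by
    intro a ha
    simp only [Set.mem_setOf_eq] at *
    have h := map_neg (iterateFrobenius K p k) a
    rw [iterateFrobenius_def, iterateFrobenius_def, ha] at h
    exact h
  inv_mem' := by
    intro a ha
    simp only [Set.mem_setOf_eq] at *
    rw [inv_pow, ha]

lemma mem_frobFixed_iff {K : Type} [Field K] {p k : ℕ} [Fact p.Prime] [CharP K p] (x : K) :
    x ∈ frobFixed K p k ↔ x ^ p ^ k = x := Iff.rfl

/-- Cardinality of the fixed subfield. -/
lemma card_frobFixed (K : Type) [Field K] [Fintype K] (p k : ℕ) [Fact p.Prime] [CharP K p]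
    (hk : 0 < k) (hdvd : p ^ k - 1 ∣ Fintype.card K - 1) :
    Nat.card (frobFixed K p k) = p ^ k := by
  classical
  set n := p ^ k with hn
  have hn2 : 2 ≤ n := by
    calc 2 ≤ p := (Fact.out : p.Prime).two_le
    _ ≤ p ^ k := Nat.le_self_pow hk.ne' p
  set d := n - 1 with hd
  have hd0 : 0 < d := by omega
  -- get a primitive d-th root of unity
  obtain ⟨g, hg⟩ := IsCyclic.exists_generator (α := Kˣ)
  have horder : orderOf g = Fintype.card K - 1 := by
    rw [orderOf_eq_card_of_forall_mem_zpowers hg, Nat.card_eq_fintype_card, Fintype.card_units]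
  have horder0 : orderOf g ≠ 0 := by
    rw [horder]
    have := Fintype.one_lt_card (α := K)
    omega
  set ζ : Kˣ := g ^ (orderOf g / d) with hζ
  have hζord : orderOf ζ = d := by
    rw [hζ]
    exact orderOf_pow_orderOf_div horder0 (horder ▸ hdvd)
  have hprim : IsPrimitiveRoot ((ζ : Kˣ) : K) d := by
    have h1 : IsPrimitiveRoot ((ζ : Kˣ) : K) (orderOf ((ζ : Kˣ) : K)) :=
      IsPrimitiveRoot.orderOf _
    rwa [orderOf_units, hζord] at h1
  have hroots : (Polynomial.nthRootsFinset d (1 : K)).card = d := hprim.card_nthRootsFinset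
  -- the fixed subfield is {0} ∪ (d-th roots of unity)
  have hset : (frobFixed K p k : Set K) = insert (0 : K) ↑(Polynomial.nthRootsFinset d (1 : K)) := by
    ext x
    simp only [SetLike.mem_coe, mem_frobFixed_iff, Set.mem_insert_iff, Finset.coe_insert,
      Finset.mem_coe, Polynomial.mem_nthRootsFinset hd0]
    constructor
    · intro hx
      by_cases hx0 : x = 0
      · exact Or.inl hx0
      · right
        have hxd : x ^ d * x = 1 * x := by
          rw [one_mul, ← pow_succ]
          have hdn : d + 1 = n := by omega
          rw [hdn, hn]
          exact hx
        exact mul_right_cancel₀ hx0 hxd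
    · rintro (rfl | hx)
      · exact zero_pow (by omega)
      · have hdn : n = d + 1 := by omega
        rw [← hn, hdn, pow_succ, hx, one_mul]
  have h0notin : (0 : K) ∉ (Polynomial.nthRootsFinset d (1 : K) : Set K) := by
    simp only [Finset.mem_coe, Polynomial.mem_nthRootsFinset hd0]
    rw [zero_pow hd0.ne']
    exact zero_ne_one
  calc Nat.card (frobFixed K p k) = Nat.card ((frobFixed K p k : Set K)) := rfl
    _ = ((frobFixed K p k : Set K)).ncard := Nat.card_coe_set_eq _
    _ = (insert (0 : K) ↑(Polynomial.nthRootsFinset d (1 : K)) : Set K).ncard := by rw [hset]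
    _ = (Polynomial.nthRootsFinset d (1 : K) : Set K).ncard + 1 :=
        Set.ncard_insert_of_notMem h0notin (Set.toFinite _)
    _ = d + 1 := by rw [Set.ncard_coe_finset, hroots]
    _ = n := by omega

/-- Singer's theorem: for every prime `p` and positive integer `m`, with
`q = p^{2m} + p^m + 1`, there is a perfect difference set in `ℤ/qℤ` of
cardinality `p^m + 1`. -/
theorem singer_theorem (p m : ℕ) (hp : p.Prime) (hm : 0 < m) :
    ∃ S : Finset (ZMod (p ^ (2 * m) + p ^ m + 1)),
      S.card = p ^ m + 1 ∧ IsPerfectDifferenceSet S := by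
  classical
  haveI : Fact p.Prime := ⟨hp⟩
  haveI : Fintype (GaloisField p (3 * m)) := Fintype.ofFinite _
  have h3m : 3 * m ≠ 0 := by omega
  have hcardK : Fintype.card (GaloisField p (3 * m)) = p ^ (3 * m) := by
    rw [← Nat.card_eq_fintype_card, GaloisField.card p (3 * m) h3m]
  have hn2 : 2 ≤ p ^ m := by
    calc 2 ≤ p := hp.two_le
    _ ≤ p ^ m := Nat.le_self_pow hm.ne' p
  have hpowm : p ^ (3 * m) = (p ^ m) ^ 3 := by
    rw [← pow_mul, mul_comm]
  have hpow2 : p ^ (2 * m) = (p ^ m) ^ 2 := by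
    rw [← pow_mul, mul_comm]
  have hiden : (p ^ m) ^ 3 - 1 = ((p ^ m) ^ 2 + p ^ m + 1) * (p ^ m - 1) := by
    obtain ⟨k, hk⟩ : ∃ k, p ^ m = k + 1 := ⟨p ^ m - 1, by omega⟩
    rw [hk]
    have e1 : (k + 1) ^ 3 = (((k + 1) ^ 2 + (k + 1) + 1)) * k + 1 := by ring
    rw [e1, Nat.add_sub_cancel, Nat.add_sub_cancel]
  have hdvd : p ^ m - 1 ∣ Fintype.card (GaloisField p (3 * m)) - 1 := by
    rw [hcardK, hpowm, hiden]
    exact ⟨(p ^ m) ^ 2 + p ^ m + 1, by ring⟩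
  set F : Subfield (GaloisField p (3 * m)) := frobFixed (GaloisField p (3 * m)) p m with hF
  have hcardF : Nat.card F = p ^ m := card_frobFixed _ p m hm hdvd
  have hcardF' : Fintype.card F = p ^ m := by
    rw [← Nat.card_eq_fintype_card, hcardF]
  -- the degree of the extension is 3
  have h3 : Module.finrank F (GaloisField p (3 * m)) = 3 := by
    have hpow := card_eq_pow_finrank (K := F) (V := GaloisField p (3 * m))
    rw [hcardK, hcardF', ← pow_mul] at hpow
    have h3m' : 3 * m = m * Module.finrank F (GaloisField p (3 * m)) :=
      Nat.pow_right_injective hp.two_le hpow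
    have h2 : m * 3 = m * Module.finrank F (GaloisField p (3 * m)) := by omega
    exact (Nat.eq_of_mul_eq_mul_left hm h2).symm
  have hq : Fintype.card (GaloisField p (3 * m)) - 1 =
      (p ^ (2 * m) + p ^ m + 1) * (Fintype.card F - 1) := by
    rw [hcardK, hcardF', hpowm, hpow2, hiden]
  obtain ⟨S, hS1, hS2⟩ := singer_abstract F (p ^ (2 * m) + p ^ m + 1) h3 hq
  exact ⟨S, by rw [hS1, hcardF'], hS2⟩
end

section
/- (Purity law) Let D be a countable subgroup of the circle group 𝕋 and let ρ be a probability measure on 𝕋 that is D-quasi-invariant (for every Borel set A and every d ∈ D, ρ(A) = 0 if and only if ρ(A − d) = 0) and D-ergodic (ρ(A) ∈ {0,1} for every Borel set A with A − d = A for all d ∈ D). Then exactly one of the following holds: ρ is discrete (purely atomic); ρ is continuous and singular with respect to the Haar (Lebesgue) measure on 𝕋; or ρ is equivalent to the Haar (Lebesgue) measure on 𝕋. -/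
open MeasureTheory Filter

instance : Fact (0 < 2 * Real.pi) := ⟨by positivity⟩

/-- The circle group `𝕋 = ℝ/2πℤ`. -/
abbrev Torus := AddCircle (2 * Real.pi)

/-- `ρ` is discrete (purely atomic): it is carried by a countable set. -/
def IsDiscreteMeasure (ρ : Measure Torus) : Prop :=
  ∃ C : Set Torus, C.Countable ∧ ρ Cᶜ = 0

/-- `ρ` is continuous (no atoms) and singular with respect to Haar measure. -/
def IsContinuousSingularMeasure (ρ : Measure Torus) : Prop :=
  (∀ x : Torus, ρ {x} = 0) ∧ ρ ⟂ₘ (volume : Measure Torus)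

/-- `ρ` is equivalent to the Haar (Lebesgue) measure on the circle. -/
def IsEquivalentToHaar (ρ : Measure Torus) : Prop :=
  ρ ≪ (volume : Measure Torus) ∧ (volume : Measure Torus) ≪ ρ

section Auxiliary

open Set
open scoped ENNReal

lemma torus_noAtoms_volume : NoAtoms (volume : Measure Torus) := by
  constructor
  intro x
  have h : ({x} : Set Torus) = Metric.closedBall x 0 := by simp
  rw [h, AddCircle.volume_closedBall]
  simp

lemma torus_volume_univ_ne_zero : (volume : Measure Torus) Set.univ ≠ 0 := by
  rw [AddCircle.measure_univ]
  simp [Real.pi_pos, Real.pi_pos.le]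

/-- A countable subgroup of the circle is either dense or finite. -/
lemma torus_dense_or_finite (D : AddSubgroup Torus) :
    Dense (D : Set Torus) ∨ (D : Set Torus).Finite := by
  set mk : ℝ →+ Torus := QuotientAddGroup.mk' (AddSubgroup.zmultiples (2 * Real.pi)) with hmk
  have hmks : Function.Surjective mk := QuotientAddGroup.mk'_surjective _
  have hmkc : Continuous mk := continuous_quotient_mk'
  set S : AddSubgroup ℝ := D.comap mk with hS
  have himg : mk '' (S : Set ℝ) = (D : Set Torus) := by
    ext x
    constructor
    · rintro ⟨r, hr, rfl⟩; exact hr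
    · intro hx
      obtain ⟨r, rfl⟩ := hmks x
      exact ⟨r, hx, rfl⟩
  rcases AddSubgroup.dense_or_cyclic S with h | ⟨a, ha⟩
  · left
    have : Dense (mk '' (S : Set ℝ)) := hmks.denseRange.dense_image hmkc h
    rwa [himg] at this
  · right
    have hmk2pi : mk (2 * Real.pi) = 0 := by
      simp [hmk, QuotientAddGroup.mk'_apply]
    have h2pi : (2 * Real.pi) ∈ S := by
      simpa [hS, AddSubgroup.mem_comap, hmk2pi] using (zero_mem D)
    rw [ha, ← AddSubgroup.zmultiples_eq_closure] at h2pi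
    obtain ⟨n, hn⟩ := AddSubgroup.mem_zmultiples_iff.mp h2pi
    have hn0 : n ≠ 0 := by
      rintro rfl
      simp at hn
    have hfin : IsOfFinAddOrder (mk a) := by
      rw [isOfFinAddOrder_iff_zsmul_eq_zero]
      exact ⟨n, hn0, by rw [← map_zsmul, hn, hmk2pi]⟩
    have hsub : (D : Set Torus) ⊆ (AddSubgroup.zmultiples (mk a) : Set Torus) := by
      rw [← himg, ha, ← AddSubgroup.zmultiples_eq_closure]
      rintro _ ⟨r, hr, rfl⟩
      obtain ⟨k, rfl⟩ := AddSubgroup.mem_zmultiples_iff.mp hr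
      exact AddSubgroup.mem_zmultiples_iff.mpr ⟨k, (map_zsmul mk k a).symm⟩
    exact (hfin.finite_zmultiples).subset hsub

/-- A `{0,1}`-valued Borel probability measure on the circle is a Dirac measure. -/
lemma torus_zero_one_dirac (ν : Measure Torus) [IsProbabilityMeasure ν]
    (h01 : ∀ S : Set Torus, MeasurableSet S → ν S = 0 ∨ ν S = 1) :
    ∃ p : Torus, ν {p} = 1 := by
  obtain ⟨B, hBc, -, hB⟩ := TopologicalSpace.exists_countable_basis Torus
  set Z : Set (Set Torus) := {b ∈ B | ν b = 0} with hZ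
  have hZc : Z.Countable := hBc.mono (sep_subset _ _)
  have hU : ν (⋃₀ Z) = 0 := by
    rw [measure_sUnion_null_iff hZc]
    exact fun s hs => hs.2
  have hUopen : IsOpen (⋃₀ Z) := isOpen_sUnion fun s hs => hB.isOpen hs.1
  have hK : ν (⋃₀ Z)ᶜ = 1 := by
    rw [measure_compl hUopen.measurableSet (measure_ne_top _ _), hU, measure_univ]
    simp
  have hne : ((⋃₀ Z)ᶜ : Set Torus).Nonempty := by
    rcases eq_empty_or_nonempty ((⋃₀ Z)ᶜ : Set Torus) with h | h
    · rw [h] at hK; simp at hK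
    · exact h
  obtain ⟨p, hp⟩ := hne
  have hsub : ((⋃₀ Z)ᶜ : Set Torus) ⊆ {p} := by
    intro q hq
    by_contra hqp
    have hqp' : q ≠ p := by simpa using hqp
    obtain ⟨u, v, hu, hv, hqu, hpv, huv⟩ := t2_separation hqp'
    obtain ⟨b, hbB, hqb, hbu⟩ := hB.exists_subset_of_mem_open hqu hu
    obtain ⟨c, hcB, hpc, hcv⟩ := hB.exists_subset_of_mem_open hpv hv
    have hb1 : ν b = 1 := by
      rcases h01 b (hB.isOpen hbB).measurableSet with h | h
      · exact absurd (mem_compl_iff _ _ |>.mp hq ⟨b, ⟨hbB, h⟩, hqb⟩) (fun x => x)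
      · exact h
    have hc1 : ν c = 1 := by
      rcases h01 c (hB.isOpen hcB).measurableSet with h | h
      · exact absurd (mem_compl_iff _ _ |>.mp hp ⟨c, ⟨hcB, h⟩, hpc⟩) (fun x => x)
      · exact h
    have hdisj : Disjoint b c := huv.mono hbu hcv
    have : (2 : ℝ≥0∞) ≤ 1 := by
      calc (2:ℝ≥0∞) = ν b + ν c := by rw [hb1, hc1]; norm_num
      _ = ν (b ∪ c) := (measure_union hdisj (hB.isOpen hcB).measurableSet).symm
      _ ≤ ν univ := measure_mono (subset_univ _)
      _ = 1 := measure_univ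
    norm_num at this
  refine ⟨p, le_antisymm prob_le_one ?_⟩
  calc (1:ℝ≥0∞) = ν (⋃₀ Z)ᶜ := hK.symm
  _ ≤ ν {p} := measure_mono hsub

/-- A probability measure which is ergodic under a finite subgroup is carried by a
countable set. -/
lemma finiteD_discrete (D : AddSubgroup Torus) (hfin : (D : Set Torus).Finite)
    (ρ : Measure Torus) [IsProbabilityMeasure ρ]
    (herg : ∀ A : Set Torus, MeasurableSet A →
      (∀ d ∈ D, (fun x => x + d) ⁻¹' A = A) → ρ A = 0 ∨ ρ A = 1) :
    ∃ C : Set Torus, C.Countable ∧ ρ Cᶜ = 0 := by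
  haveI : Finite D := hfin.to_subtype
  set n : ℕ := Nat.card D with hn
  have hn0 : n ≠ 0 := Nat.card_ne_zero.mpr ⟨⟨⟨0, zero_mem D⟩⟩, inferInstance⟩
  have hdn : ∀ d ∈ D, n • d = 0 := by
    intro d hd
    have h1 : n • (⟨d, hd⟩ : D) = 0 := card_nsmul_eq_zero'
    exact_mod_cast congrArg (AddSubgroup.subtype D) h1
  set q : Torus → Torus := fun x => n • x with hq
  have hqc : Continuous q := continuous_nsmul n
  have hqm : Measurable q := hqc.measurable
  set ν : Measure Torus := Measure.map q ρ with hν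
  haveI : IsProbabilityMeasure ν := Measure.isProbabilityMeasure_map hqm.aemeasurable
  have h01 : ∀ S : Set Torus, MeasurableSet S → ν S = 0 ∨ ν S = 1 := by
    intro S hS
    rw [hν, Measure.map_apply hqm hS]
    refine herg _ (hqm hS) ?_
    intro d hd
    ext x
    simp only [mem_preimage, hq]
    rw [smul_add, hdn d hd, add_zero]
  obtain ⟨p, hp⟩ := torus_zero_one_dirac ν h01
  have hfib : ρ (q ⁻¹' {p}) = 1 := by
    rw [hν, Measure.map_apply hqm (measurableSet_singleton p)] at hp
    exact hp
  obtain ⟨θ, hθ⟩ := QuotientAddGroup.mk_surjective p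
  refine ⟨q ⁻¹' {p}, ?_, ?_⟩
  · have hsub : q ⁻¹' {p} ⊆
        Set.range (fun k : ℤ => (((θ + (2 * Real.pi) * k) / n : ℝ) : Torus)) := by
      intro x hx
      obtain ⟨r, rfl⟩ := QuotientAddGroup.mk_surjective x
      have hxp : ((n • r : ℝ) : Torus) = ((θ : ℝ) : Torus) := by
        rw [AddCircle.coe_nsmul, hθ]
        exact hx
      rw [QuotientAddGroup.eq_iff_sub_mem] at hxp
      obtain ⟨k, hk⟩ := AddSubgroup.mem_zmultiples_iff.mp hxp
      refine ⟨k, ?_⟩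
      have hnr : (n : ℝ) * r = θ + (2 * Real.pi) * k := by
        have : (k : ℝ) * (2 * Real.pi) = n • r - θ := by
          rw [← hk]; push_cast [zsmul_eq_mul]; ring
        rw [nsmul_eq_mul] at this
        linarith
      have : (θ + (2 * Real.pi) * k) / n = r := by
        rw [← hnr]
        field_simp
      show (((θ + 2 * Real.pi * (k:ℝ)) / n : ℝ) : Torus) = ((r:ℝ) : Torus)
      rw [this]
    exact (countable_range _).mono hsub
  · rw [measure_compl (hqm (measurableSet_singleton p)) (measure_ne_top _ _), hfib, measure_univ]
    simp

lemma atoms_countable (ρ : Measure Torus) [IsProbabilityMeasure ρ] :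
    Set.Countable {x : Torus | ρ {x} ≠ 0} := by
  have h := MeasureTheory.Measure.countable_meas_level_set_pos (μ := ρ) (g := id) measurable_id
  refine h.mono ?_
  intro x hx
  simp only [mem_setOf_eq] at *
  have hs : {a : Torus | id a = x} = {x} := by ext a; simp
  rw [hs]
  exact pos_iff_ne_zero.mpr hx

/-- Mutual exclusivity: discrete vs continuous. -/
lemma not_discrete_and_continuousSingular (ρ : Measure Torus) [IsProbabilityMeasure ρ]
    (hd : IsDiscreteMeasure ρ) (hc : IsContinuousSingularMeasure ρ) : False := by
  obtain ⟨C, hCc, hCn⟩ := hd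
  haveI : NullSingletonClass ρ := ⟨hc.1⟩
  have h1 : ρ C = 0 := hCc.measure_zero ρ
  have : ρ Set.univ = 0 := by
    have := measure_union_le (μ := ρ) C Cᶜ
    rw [Set.union_compl_self, h1, hCn] at this
    simpa using this
  rw [measure_univ] at this
  exact one_ne_zero this

/-- Mutual exclusivity: discrete vs equivalent to Haar. -/
lemma not_discrete_and_equivalent (ρ : Measure Torus) [IsProbabilityMeasure ρ]
    (hd : IsDiscreteMeasure ρ) (he : IsEquivalentToHaar ρ) : False := by
  obtain ⟨C, hCc, hCn⟩ := hd
  haveI : NullSingletonClass (volume : Measure Torus) := torus_noAtoms_volume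
  have h1 : (volume : Measure Torus) C = 0 := hCc.measure_zero _
  have h2 : (volume : Measure Torus) Cᶜ = 0 := he.2 hCn
  have : (volume : Measure Torus) Set.univ = 0 := by
    have := measure_union_le (μ := (volume : Measure Torus)) C Cᶜ
    rw [Set.union_compl_self, h1, h2] at this
    simpa using this
  exact torus_volume_univ_ne_zero this

/-- Mutual exclusivity: continuous singular vs equivalent to Haar. -/
lemma not_continuousSingular_and_equivalent (ρ : Measure Torus) [IsProbabilityMeasure ρ]
    (hc : IsContinuousSingularMeasure ρ) (he : IsEquivalentToHaar ρ) : False := by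
  obtain ⟨s, -, hs0, hsc⟩ := hc.2
  have h2 : ρ sᶜ = 0 := he.1 hsc
  have : ρ Set.univ = 0 := by
    have := measure_union_le (μ := ρ) s sᶜ
    rw [Set.union_compl_self, hs0, h2] at this
    simpa using this
  rw [measure_univ] at this
  exact one_ne_zero this

end Auxiliary

open Set
open scoped ENNReal

/-- Purity law: a probability measure on the circle that is quasi-invariant and ergodic
under a countable subgroup `D` is either discrete, or continuous singular, or equivalent
to Haar measure — and exactly one of these holds. -/
theorem purity_law
    (D : AddSubgroup Torus) (hD : (D : Set Torus).Countable)
    (ρ : Measure Torus) [IsProbabilityMeasure ρ]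
    (hqi : ∀ A : Set Torus, MeasurableSet A → ∀ d ∈ D,
      (ρ A = 0 ↔ ρ ((fun x => x + d) ⁻¹' A) = 0))
    (herg : ∀ A : Set Torus, MeasurableSet A →
      (∀ d ∈ D, (fun x => x + d) ⁻¹' A = A) → ρ A = 0 ∨ ρ A = 1) :
    (IsDiscreteMeasure ρ ∧ ¬IsContinuousSingularMeasure ρ ∧ ¬IsEquivalentToHaar ρ) ∨
    (¬IsDiscreteMeasure ρ ∧ IsContinuousSingularMeasure ρ ∧ ¬IsEquivalentToHaar ρ) ∨
    (¬IsDiscreteMeasure ρ ∧ ¬IsContinuousSingularMeasure ρ ∧ IsEquivalentToHaar ρ) := by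
  classical
  suffices h : IsDiscreteMeasure ρ ∨ IsContinuousSingularMeasure ρ ∨ IsEquivalentToHaar ρ by
    rcases h with h | h | h
    · exact Or.inl ⟨h, fun hc => absurd (not_discrete_and_continuousSingular ρ h hc) not_false,
        fun he => absurd (not_discrete_and_equivalent ρ h he) not_false⟩
    · exact Or.inr (Or.inl ⟨fun hd => absurd (not_discrete_and_continuousSingular ρ hd h)
        not_false, h,
        fun he => absurd (not_continuousSingular_and_equivalent ρ h he) not_false⟩)
    · exact Or.inr (Or.inr ⟨fun hd => absurd (not_discrete_and_equivalent ρ hd h) not_false,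
        fun hc => absurd (not_continuousSingular_and_equivalent ρ hc h) not_false, h⟩)
  haveI : Countable (D : Set Torus) := hD.to_subtype
  -- The set of atoms.
  set A : Set Torus := {x : Torus | ρ {x} ≠ 0} with hA
  have hAc : A.Countable := atoms_countable ρ
  have hAm : MeasurableSet A := hAc.measurableSet
  have hAinv : ∀ d ∈ D, (fun x => x + d) ⁻¹' A = A := by
    intro d hd
    ext x
    have hpre : (fun y : Torus => y + d) ⁻¹' {x + d} = {x} := by
      ext y
      simp [add_left_inj]
    have := hqi {x + d} (measurableSet_singleton _) d hd
    rw [hpre] at this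
    simp only [Set.mem_preimage, hA, Set.mem_setOf_eq]
    exact not_congr this
  rcases herg A hAm hAinv with hA0 | hA1
  · -- no atoms
    have hcont : ∀ x : Torus, ρ {x} = 0 := by
      intro x
      by_contra hx
      have hxA : ρ {x} ≤ ρ A := measure_mono (by simpa [hA] using hx)
      rw [hA0] at hxA
      exact hx (le_antisymm hxA zero_le)
    haveI : NullSingletonClass ρ := ⟨hcont⟩
    -- Lebesgue decomposition: carrier of the singular part.
    obtain ⟨s, hsm, hs1, hs2⟩ := Measure.mutuallySingular_singularPart ρ volume
    set T : Set Torus := sᶜ with hTdef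
    have hTm : MeasurableSet T := hsm.compl
    have hTvol : (volume : Measure Torus) T = 0 := hs2
    have hTsing : ρ.singularPart volume Tᶜ = 0 := by
      rw [hTdef, compl_compl]; exact hs1
    -- The D-saturation of T.
    set B : Set Torus := ⋃ d : (D : Set Torus), (fun x => x + (d : Torus)) ⁻¹' T with hB
    have hBm : MeasurableSet B :=
      MeasurableSet.iUnion fun d => hTm.preimage (measurable_add_const _)
    have hTB : T ⊆ B := by
      intro x hx
      exact Set.mem_iUnion.mpr ⟨⟨0, zero_mem D⟩, by simpa using hx⟩
    have hBvol : (volume : Measure Torus) B = 0 := by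
      refine measure_iUnion_null fun d => ?_
      have : (fun x : Torus => x + (d : Torus)) = (fun x : Torus => (d : Torus) + x) := by
        funext x; exact add_comm _ _
      rw [this, measure_preimage_add]
      exact hTvol
    have hBinv : ∀ d ∈ D, (fun x => x + d) ⁻¹' B = B := by
      intro d hd
      ext x
      simp only [hB, Set.mem_preimage, Set.mem_iUnion]
      constructor
      · rintro ⟨e, he⟩
        exact ⟨⟨d + (e : Torus), add_mem hd e.2⟩, by
          simpa [add_assoc, add_comm, add_left_comm] using he⟩
      · rintro ⟨e, he⟩
        refine ⟨⟨(e : Torus) - d, sub_mem e.2 hd⟩, ?_⟩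
        simpa [add_assoc, add_sub_cancel, add_comm, add_left_comm, sub_eq_add_neg]
          using he
    rcases herg B hBm hBinv with hB0 | hB1
    · -- absolutely continuous part dominates: ρ ≪ volume, and then ρ ∼ volume.
      right; right
      have hsp : ρ.singularPart volume = 0 := by
        rw [← Measure.measure_univ_eq_zero]
        have h1 : ρ.singularPart volume B = 0 :=
          le_antisymm (le_trans (Measure.singularPart_le ρ volume B) hB0.le) zero_le
        have h2 : ρ.singularPart volume Bᶜ = 0 :=
          le_antisymm (le_trans (measure_mono (Set.compl_subset_compl.mpr hTB)) hTsing.le)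
            zero_le
        have := measure_union_le (μ := ρ.singularPart volume) B Bᶜ
        rw [Set.union_compl_self, h1, h2] at this
        simpa using this
      have hac : ρ ≪ (volume : Measure Torus) := (Measure.singularPart_eq_zero ρ volume).mp hsp
      refine ⟨hac, ?_⟩
      -- density and its support
      set f : Torus → ℝ≥0∞ := ρ.rnDeriv volume with hf
      have hfm : Measurable f := Measure.measurable_rnDeriv ρ volume
      have hrepr : (volume : Measure Torus).withDensity f = ρ :=
        (Measure.absolutelyContinuous_iff_withDensity_rnDeriv_eq).mp hac
      set E : Set Torus := {x | f x ≠ 0} with hE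
      have hEm : MeasurableSet E := (hfm (measurableSet_singleton 0)).compl
      have hρEc : ρ Eᶜ = 0 := by
        rw [← hrepr, withDensity_apply _ hEm.compl]
        have h0 : ∀ᵐ x ∂(volume : Measure Torus), x ∈ Eᶜ → f x = (fun _ => (0:ℝ≥0∞)) x :=
          ae_of_all _ (fun x hx => by simpa [hE] using hx)
        rw [setLIntegral_congr_fun_ae hEm.compl h0]
        simp
      -- the D-core of E
      set F : Set Torus := ⋂ d : (D : Set Torus), (fun x => x + (d : Torus)) ⁻¹' E with hF
      have hFm : MeasurableSet F :=
        MeasurableSet.iInter fun d => hEm.preimage (measurable_add_const _)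
      have hFE : F ⊆ E := by
        intro x hx
        have := Set.mem_iInter.mp hx ⟨0, zero_mem D⟩
        simpa using this
      have hρFc : ρ Fᶜ = 0 := by
        rw [hF, Set.compl_iInter]
        refine measure_iUnion_null fun d => ?_
        have : (fun x : Torus => x + (d : Torus)) ⁻¹' Eᶜ = ((fun x : Torus =>
            x + (d : Torus)) ⁻¹' E)ᶜ := rfl
        rw [← this]
        exact (hqi Eᶜ hEm.compl d d.2).mp hρEc
      have hρF : ρ F = 1 := (prob_compl_eq_zero_iff hFm).mp hρFc
      have hFinv : ∀ d ∈ D, (fun x => x + d) ⁻¹' F = F := by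
        intro d hd
        ext x
        simp only [hF, Set.mem_preimage, Set.mem_iInter]
        constructor
        · intro h e
          have := h ⟨(e : Torus) - d, sub_mem e.2 hd⟩
          simpa [add_assoc, add_comm, add_left_comm, sub_eq_add_neg] using this
        · intro h e
          have := h ⟨d + (e : Torus), add_mem hd e.2⟩
          simpa [add_assoc, add_comm, add_left_comm] using this
      -- volume Fᶜ = 0
      have hvolFc : (volume : Measure Torus) Fᶜ = 0 := by
        rcases torus_dense_or_finite D with hdense | hfin
        · have hDsub : (D : Set Torus) ⊆ {g : Torus | (g +ᵥ ·) ⁻¹' F = F} := by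
            intro d hd
            have hc : (fun x : Torus => d +ᵥ x) = (fun x => x + d) := by
              funext x
              simp [add_comm]
            show (fun x : Torus => d +ᵥ x) ⁻¹' F = F
            rw [hc]
            exact hFinv d hd
          have hdense' : Dense {g : Torus | (g +ᵥ ·) ⁻¹' F = F} := hdense.mono hDsub
          have h := aeconst_of_dense_setOf_preimage_vadd_eq (M := Torus)
            (μ := (volume : Measure Torus)) hFm.nullMeasurableSet hdense'
          rcases eventuallyConst_set'.mp h with h1 | h1
          · exfalso
            have : ρ F = 0 := hac (ae_eq_empty.mp h1)
            rw [hρF] at this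
            exact one_ne_zero this
          · have := ae_eq_univ.mp h1
            simpa using this
        · exfalso
          obtain ⟨C, hCc, hCn⟩ := finiteD_discrete D hfin ρ herg
          have h1 : ρ C = 0 := hCc.measure_zero ρ
          have : ρ Set.univ = 0 := by
            have := measure_union_le (μ := ρ) C Cᶜ
            rw [Set.union_compl_self, h1, hCn] at this
            simpa using this
          rw [measure_univ] at this
          exact one_ne_zero this
      -- volume ≪ ρ
      refine Measure.AbsolutelyContinuous.mk ?_
      intro t htm hρt
      have hft : (volume : Measure Torus) (E ∩ t) = 0 := by
        have h0 : ∫⁻ x in t, f x ∂(volume : Measure Torus) = 0 := by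
          rw [← withDensity_apply _ htm, hrepr]
          exact hρt
        have h1 : ∀ᵐ x ∂(volume : Measure Torus), x ∈ t → f x = 0 :=
          (setLIntegral_eq_zero_iff htm hfm).mp h0
        have h2 := ae_iff.mp h1
        refine le_antisymm (le_trans (measure_mono ?_) h2.le) zero_le
        rintro x ⟨hxE, hxt⟩
        simp only [Set.mem_setOf_eq]
        intro h
        exact hxE (h hxt)
      have hEc : (volume : Measure Torus) Eᶜ = 0 :=
        le_antisymm (le_trans (measure_mono (Set.compl_subset_compl.mpr hFE)) hvolFc.le)
          zero_le
      have : t ⊆ (E ∩ t) ∪ Eᶜ := by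
        intro x hx
        by_cases hxE : x ∈ E
        · exact Or.inl ⟨hxE, hx⟩
        · exact Or.inr hxE
      refine le_antisymm ?_ zero_le
      calc (volume : Measure Torus) t ≤ (volume : Measure Torus) ((E ∩ t) ∪ Eᶜ) :=
            measure_mono this
        _ ≤ (volume : Measure Torus) (E ∩ t) + (volume : Measure Torus) Eᶜ :=
            measure_union_le _ _
        _ = 0 := by rw [hft, hEc, add_zero]
    · -- singular case
      right; left
      exact ⟨hcont, ⟨Bᶜ, hBm.compl, (prob_compl_eq_zero_iff hBm).mpr hB1,
        by rwa [compl_compl]⟩⟩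
  · -- discrete case
    left
    exact ⟨A, hAc, by rwa [prob_compl_eq_zero_iff hAm]⟩
end
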